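/- For every positive integer k ≥ 1 there exist two distinct binary strings of length 4(2^k − 1) − 2 with the same gapped k-deck; that is, G(k) ≤ 4(2^k − 1) − 2, where G(k) is the smallest positive integer n such that there exist two distinct binary strings x, y of length n with B^(k)(x) = B^(k)(y). -/

import Mathlib

/-- The multiset of all `s`-gapped subsequences of a binary string (all lengths,
including the empty subsequence), counted with multiplicity over index choices:
consecutive chosen indices must differ by at least `s`. -/
def gappedSubseqs (s : ℕ) : List Bool → Multiset (List Bool)
  | [] => {[]}
  | a :: l => gappedSubseqs s l + (gappedSubseqs s (l.drop (s - 1))).map (a :: ·)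
termination_by x => x.length
decreasing_by
  · simp
  · simp only [List.length_drop, List.length_cons]; omega

/-- The `s`-gapped `k`-deck: all `s`-gapped subsequences of length between 1 and `k`. -/
def gDeck (s k : ℕ) (x : List Bool) : Multiset (List Bool) :=
  (gappedSubseqs s x).filter (fun w => 1 ≤ w.length ∧ w.length ≤ k)

/-- The exact `s`-gapped `k`-deck: all `s`-gapped subsequences of length exactly `k`. -/
def dDeck (s k : ℕ) (x : List Bool) : Multiset (List Bool) :=
  (gappedSubseqs s x).filter (fun w => w.length = k)

/-- The classical (ungapped) `k`-deck: the multiset of all length-`k` subsequences. -/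
def deck (k : ℕ) (x : List Bool) : Multiset (List Bool) :=
  (gappedSubseqs 1 x).filter (fun w => w.length = k)

/-- The gapped `k`-deck `B^(k)` (gap `2`). -/
def Bdeck (k : ℕ) (x : List Bool) : Multiset (List Bool) := gDeck 2 k x

/-- `B_L^(k)`: the gapped `k`-deck of the string punctured on the left. -/
def BLdeck (k : ℕ) (x : List Bool) : Multiset (List Bool) := Bdeck k x.tail

/-- `B_R^(k)`: the gapped `k`-deck of the string punctured on the right. -/
def BRdeck (k : ℕ) (x : List Bool) : Multiset (List Bool) := Bdeck k x.dropLast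

/-- `B_LR^(k)`: the gapped `k`-deck of the string punctured on both ends. -/
def BLRdeck (k : ℕ) (x : List Bool) : Multiset (List Bool) := Bdeck k x.tail.dropLast

/-- `S(k)`: the smallest positive `n` such that two distinct binary strings of
length `n` share the same `k`-deck. -/
noncomputable def Sval (k : ℕ) : ℕ :=
  sInf {n | 0 < n ∧ ∃ x y : List Bool, x.length = n ∧ y.length = n ∧ x ≠ y ∧
    deck k x = deck k y}

/-- `G(k)`: the smallest positive `n` such that two distinct binary strings of
length `n` share the same gapped `k`-deck. -/
noncomputable def Gval (k : ℕ) : ℕ :=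
  sInf {n | 0 < n ∧ ∃ x y : List Bool, x.length = n ∧ y.length = n ∧ x ≠ y ∧
    Bdeck k x = Bdeck k y}

/-- `G_s(k)`: the smallest positive `n` such that two distinct binary strings of
length `n` share the same `s`-gapped `k`-deck. -/
noncomputable def Gs (s k : ℕ) : ℕ :=
  sInf {n | 0 < n ∧ ∃ x y : List Bool, x.length = n ∧ y.length = n ∧ x ≠ y ∧
    gDeck s k x = gDeck s k y}

/-- `G*(k)`: the smallest positive `n` such that two distinct binary strings of
length `n` share the same gapped `k`-deck, also after puncturing on the left,
right and both sides. -/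
noncomputable def Gstar (k : ℕ) : ℕ :=
  sInf {n | 0 < n ∧ ∃ x y : List Bool, x.length = n ∧ y.length = n ∧ x ≠ y ∧
    Bdeck k x = Bdeck k y ∧ BLdeck k x = BLdeck k y ∧
    BRdeck k x = BRdeck k y ∧ BLRdeck k x = BLRdeck k y}

mutual
/-- Morse-Thue string `x^(k+1)` (index shifted: `mtX 0 = x^(1) = (0,1)`). -/
def mtX : ℕ → List Bool
  | 0 => [false, true]
  | k + 1 => mtX k ++ mtY k
/-- Morse-Thue string `y^(k+1)` (index shifted: `mtY 0 = y^(1) = (1,0)`). -/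
def mtY : ℕ → List Bool
  | 0 => [true, false]
  | k + 1 => mtY k ++ mtX k
end

mutual
/-- Padded Morse-Thue string `x^(k+1)` (index shifted: `px 0 = x^(1) = (0,0,1,0)`). -/
def px : ℕ → List Bool
  | 0 => [false, false, true, false]
  | k + 1 => [false] ++ px k ++ [false, false] ++ py k ++ [false]
/-- Padded Morse-Thue string `y^(k+1)` (index shifted: `py 0 = y^(1) = (0,1,0,0)`). -/
def py : ℕ → List Bool
  | 0 => [false, true, false, false]
  | k + 1 => [false] ++ py k ++ [false, false] ++ px k ++ [false]
end

/-- Interleaving `(z₁,x₁,z₂,x₂,…,z_{k-1},x_{k-1},z_k)` of `z` and `x`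
(used with `|z| = |x| + 1`). -/
def interleave : List Bool → List Bool → List Bool
  | z, [] => z
  | [], _ :: _ => []
  | a :: l, b :: m => a :: b :: interleave l m

/-- `N(w, p)`: the number of occurrences of the wildcard string `w`
(entries `none` are wildcards `J`, `some b` is a letter of `Γ = {X, Y}`)
as a subsequence of `p`, each wildcard matching either letter. -/
def Nw : List (Option Bool) → List Bool → ℕ
  | [], _ => 1
  | _ :: _, [] => 0
  | a :: w, b :: p =>
      Nw (a :: w) p + if a = none ∨ a = some b then Nw w p else 0

/-- `U_r(k)`: wildcard strings of length between `r` and `k` with exactly `r`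
non-wildcard symbols. -/
def Ur (r k : ℕ) : Set (List (Option Bool)) :=
  {w | r ≤ w.length ∧ w.length ≤ k ∧ w.countP (fun a => a.isSome) = r}

/-- `U(k₁, k₂) = U₁(k₁) ∪ U₂(k₂)`. -/
def Uset (k1 k2 : ℕ) : Set (List (Option Bool)) := Ur 1 k1 ∪ Ur 2 k2

/-- `p ∼^{U(k₁,k₂)} q`: `N(w,p) = N(w,q)` for all `w ∈ U(k₁,k₂)`. -/
def equivU (k1 k2 : ℕ) (p q : List Bool) : Prop :=
  ∀ w ∈ Uset k1 k2, Nw w p = Nw w q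

/-- `S_U(k₁,k₂)`: the smallest `m` for which two distinct strings
`p, q ∈ Γ^m` satisfy `p ∼^{U(k₁,k₂)} q`. -/
noncomputable def SU (k1 k2 : ℕ) : ℕ :=
  sInf {m | ∃ p q : List Bool, p.length = m ∧ q.length = m ∧ p ≠ q ∧
    equivU k1 k2 p q}

/-- `h_{x,y}(p)`: replace each letter of `p` (`false = X`, `true = Y`) by `x`
resp. `y` padded with one `0` at each end. -/
def hxy (x y : List Bool) (p : List Bool) : List Bool :=
  (p.map (fun b => [false] ++ (if b then y else x) ++ [false])).flatten

namespace GD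

abbrev GS (u : List Bool) : Multiset (List Bool) := gappedSubseqs 2 u

lemma GS_nil : GS [] = {[]} := by rw [GS, gappedSubseqs.eq_def]

lemma GS_cons (a : Bool) (l : List Bool) :
    GS (a :: l) = GS l + (GS l.tail).map (a :: ·) := by
  rw [GS, gappedSubseqs.eq_def]
  simp [List.drop_one]

/-- Custom induction principle matching the recursion of `GS`. -/
theorem GS_ind (P : List Bool → Prop) (h0 : P []) (h : ∀ a l, P l → P l.tail → P (a :: l)) :
    ∀ u, P u
  | [] => h0
  | a :: l => h a l (GS_ind P h0 h l) (GS_ind P h0 h l.tail)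
termination_by u => u.length
decreasing_by
  · simp
  · simp [List.length_tail]

def conv (A B : Multiset (List Bool)) : Multiset (List Bool) :=
  A.bind fun a => B.map (a ++ ·)

lemma conv_add_left (A B C : Multiset (List Bool)) :
    conv (A + B) C = conv A C + conv B C := Multiset.add_bind _ _ _

lemma conv_add_right (A B C : Multiset (List Bool)) :
    conv A (B + C) = conv A B + conv A C := by
  simp [conv, Multiset.map_add, Multiset.bind_add]

lemma conv_nil_left (B : Multiset (List Bool)) : conv {[]} B = B := by
  simp [conv, Multiset.singleton_bind]

lemma conv_nil_right (A : Multiset (List Bool)) : conv A {[]} = A := by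
  simp only [conv]
  have : ∀ a : List Bool, ({[]} : Multiset (List Bool)).map (a ++ ·) = {a} := by
    simp
  simp only [this]
  simpa using Multiset.bind_singleton (fun x : List Bool => x) (s := A)

lemma conv_map_cons (a : Bool) (A B : Multiset (List Bool)) :
    conv (A.map (a :: ·)) B = (conv A B).map (a :: ·) := by
  simp only [conv, Multiset.bind_map, Multiset.map_bind, Multiset.map_map]
  rfl


/-- Key concatenation identity for gapped subsequences. -/
theorem dagger : ∀ u v : List Bool,
    GS (u ++ v) + conv (GS u.dropLast) (GS v.tail)
      = conv (GS u.dropLast) (GS v) + conv (GS u) (GS v.tail) := by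
  intro u
  induction u using GS_ind with
  | h0 => intro v; simp [GS_nil, conv_nil_left]
  | h a l ihl ihlt =>
    intro v
    cases l with
    | nil =>
      simp only [List.singleton_append, List.dropLast_singleton, List.tail_nil, GS_nil,
        conv_nil_left]
      rw [GS_cons a v, GS_cons a [], GS_nil]
      simp only [List.tail_nil, GS_nil, Multiset.map_singleton, conv_add_left, conv_nil_left]
      have hc : conv {[a]} (GS v.tail) = (GS v.tail).map (a :: ·) := by
        simp [conv, Multiset.singleton_bind]
      rw [hc]; abel
    | cons c m =>
      set l := c :: m with hl
      have htail : (l ++ v).tail = l.tail ++ v := by rw [hl]; rfl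
      have hdl : (a :: l).dropLast = a :: l.dropLast := by rw [hl]; rfl
      have e1 : GS ((a :: l) ++ v) = GS (l ++ v) + (GS (l.tail ++ v)).map (a :: ·) := by
        rw [List.cons_append, GS_cons, htail]
      have e2 : GS ((a :: l).dropLast) = GS l.dropLast + (GS l.tail.dropLast).map (a :: ·) := by
        rw [hdl, GS_cons, List.tail_dropLast]
      rw [e1, e2, GS_cons a l]
      simp only [conv_add_left, conv_map_cons]
      have IH1 := ihl v
      have IH2 := ihlt v
      calc GS (l ++ v) + (GS (l.tail ++ v)).map (a :: ·) +
            (conv (GS l.dropLast) (GS v.tail) + (conv (GS l.tail.dropLast) (GS v.tail)).map (a :: ·))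
          = (GS (l ++ v) + conv (GS l.dropLast) (GS v.tail)) +
            ((GS (l.tail ++ v) + conv (GS l.tail.dropLast) (GS v.tail)).map (a :: ·)) := by
            rw [Multiset.map_add]; abel
        _ = (conv (GS l.dropLast) (GS v) + conv (GS l) (GS v.tail)) +
            ((conv (GS l.tail.dropLast) (GS v) + conv (GS l.tail) (GS v.tail)).map (a :: ·)) := by
            rw [IH1, IH2]
        _ = conv (GS l.dropLast) (GS v) + (conv (GS l.tail.dropLast) (GS v)).map (a :: ·) +
            (conv (GS l) (GS v.tail) + (conv (GS l.tail) (GS v.tail)).map (a :: ·)) := by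
            rw [Multiset.map_add]; abel

/-- Snoc decomposition. -/
theorem GS_snoc (u : List Bool) (b : Bool) :
    GS (u ++ [b]) = GS u + (GS u.dropLast).map (· ++ [b]) := by
  have h := dagger u [b]
  have hb : GS [b] = {[]} + ({[b]} : Multiset (List Bool)) := by
    rw [GS_cons]; simp [GS_nil]
  rw [show ([b] : List Bool).tail = [] from rfl, GS_nil, conv_nil_right, conv_nil_right, hb,
    conv_add_right, conv_nil_right] at h
  have hs : conv (GS u.dropLast) {[b]} = (GS u.dropLast).map (· ++ [b]) := by
    simp [conv, Multiset.bind_singleton]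
  rw [hs] at h
  have h2 : GS u.dropLast + GS (u ++ [b]) =
      GS u.dropLast + (GS u + Multiset.map (· ++ [b]) (GS u.dropLast)) := by
    rw [add_comm (GS u.dropLast) (GS (u ++ [b])), h]; abel
  exact add_left_cancel h2

/-- Truncation at level `L`. -/
def TL (L : ℕ) (A : Multiset (List Bool)) : Multiset (List Bool) :=
  A.filter (fun w => w.length ≤ L)

lemma TL_add (L : ℕ) (A B : Multiset (List Bool)) : TL L (A + B) = TL L A + TL L B :=
  Multiset.filter_add _ _ _

/-- If a predicate implies length ≤ L, then filtering by it only depends on `TL L`. -/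
lemma filter_of_TL (p : List Bool → Prop) [DecidablePred p] (L : ℕ)
    (hp : ∀ w, p w → w.length ≤ L) {A B : Multiset (List Bool)} (h : TL L A = TL L B) :
    A.filter p = B.filter p := by
  have key : ∀ C : Multiset (List Bool), C.filter p = (TL L C).filter p := by
    intro C
    rw [TL, Multiset.filter_filter]
    exact Multiset.filter_congr (fun x _ => by
      constructor
      · exact fun hx => ⟨hx, hp x hx⟩
      · exact fun hx => hx.1)
  rw [key A, key B, h]

lemma TL_mono {L L' : ℕ} (hL : L' ≤ L) {A B : Multiset (List Bool)} (h : TL L A = TL L B) :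
    TL L' A = TL L' B :=
  filter_of_TL _ L (fun w hw => le_trans hw hL) h

lemma TL_map_cons (L : ℕ) (a : Bool) (A : Multiset (List Bool)) :
    TL L (A.map (a :: ·)) = (A.filter (fun w => w.length + 1 ≤ L)).map (a :: ·) := by
  rw [TL, Multiset.filter_map]
  congr 1

lemma TL_map_snoc (L : ℕ) (b : Bool) (A : Multiset (List Bool)) :
    TL L (A.map (· ++ [b])) = (A.filter (fun w => w.length + 1 ≤ L)).map (· ++ [b]) := by
  rw [TL, Multiset.filter_map]
  apply congrArg
  exact Multiset.filter_congr (fun x _ => by simp)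

lemma count_nil_GS (u : List Bool) : (GS u).count [] = 1 := by
  induction u using GS_ind with
  | h0 => simp [GS_nil]
  | h a l ih iht =>
    rw [GS_cons]
    rw [Multiset.count_add, ih]
    have : ([] : List Bool) ∉ (GS l.tail).map (a :: ·) := by
      simp [Multiset.mem_map]
    simp [Multiset.count_eq_zero.2 this]

lemma filter_len_zero (u : List Bool) :
    (GS u).filter (fun w => w.length = 0) = {[]} := by
  have h1 : (GS u).filter (fun w => w.length = 0) = (GS u).filter (· = []) :=
    Multiset.filter_congr (fun x _ => by simp [List.length_eq_zero_iff])
  rw [h1, show (GS u).filter (· = []) = _ from Multiset.filter_eq' (GS u) [], count_nil_GS]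
  rfl

/-- The "middle" part: subsequences of length between 1 and `L`. -/
def mid (L : ℕ) (u : List Bool) : Multiset (List Bool) :=
  (GS u).filter (fun w => 1 ≤ w.length ∧ w.length ≤ L)

def high (L : ℕ) (u : List Bool) : Multiset (List Bool) :=
  (GS u).filter (fun w => ¬ w.length ≤ L)

lemma GS_split (L : ℕ) (u : List Bool) :
    GS u = {[]} + mid L u + high L u := by
  have h1 : GS u = TL L (GS u) + high L u := (Multiset.filter_add_not _ _).symm
  have h2 : TL L (GS u) = {[]} + mid L u := by
    have h3 := (Multiset.filter_add_not (fun w : List Bool => w.length = 0) (TL L (GS u))).symm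
    rw [TL, Multiset.filter_filter, Multiset.filter_filter] at h3
    have h4 : (GS u).filter (fun w => w.length = 0 ∧ w.length ≤ L) =
        (GS u).filter (fun w => w.length = 0) :=
      Multiset.filter_congr (fun x _ => by
        constructor
        · exact fun h => h.1
        · exact fun h => ⟨h, by omega⟩)
    have h5 : (GS u).filter (fun w => ¬w.length = 0 ∧ w.length ≤ L) =
        (GS u).filter (fun w => 1 ≤ w.length ∧ w.length ≤ L) :=
      Multiset.filter_congr (fun x _ => by omega)
    rw [h4, h5, filter_len_zero] at h3
    exact h3
  rw [h1, h2]

lemma mem_conv {c : List Bool} {A B : Multiset (List Bool)} :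
    c ∈ conv A B ↔ ∃ a ∈ A, ∃ b ∈ B, a ++ b = c := by
  simp [conv, Multiset.mem_bind, Multiset.mem_map]

lemma TL_dead_pair (L : ℕ) {A B : Multiset (List Bool)}
    (hA : ∀ a ∈ A, 1 ≤ a.length) (hB : ∀ b ∈ B, ¬ b.length ≤ L) :
    TL (L+1) (conv A B) = 0 := by
  rw [TL, Multiset.filter_eq_nil]
  intro c hc
  obtain ⟨a, ha, b, hb, rfl⟩ := mem_conv.1 hc
  have := hA a ha
  have := hB b hb
  simp only [List.length_append]
  omega

lemma TL_dead_pair' (L : ℕ) {A B : Multiset (List Bool)}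
    (hA : ∀ a ∈ A, ¬ a.length ≤ L) (hB : ∀ b ∈ B, 1 ≤ b.length) :
    TL (L+1) (conv A B) = 0 := by
  rw [TL, Multiset.filter_eq_nil]
  intro c hc
  obtain ⟨a, ha, b, hb, rfl⟩ := mem_conv.1 hc
  have := hA a ha
  have := hB b hb
  simp only [List.length_append]
  omega

lemma TL_of_bounded {L : ℕ} {A : Multiset (List Bool)} (h : ∀ w ∈ A, w.length ≤ L) :
    TL L A = A := Multiset.filter_eq_self.2 h

lemma TL_singleton_nil (L : ℕ) : TL L ({[]} : Multiset (List Bool)) = {[]} := by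
  apply TL_of_bounded; simp

lemma TL_mid (L M : ℕ) (u : List Bool) (h : L ≤ M) : TL M (mid L u) = mid L u := by
  apply TL_of_bounded
  intro w hw
  have := (Multiset.mem_filter.1 hw).2
  omega

/-- KEY: truncated convolution decomposes into truncated decks plus middle convolution. -/
theorem KEY (L : ℕ) (u v : List Bool) :
    TL (L+1) (conv (GS u) (GS v)) + {[]} =
      TL (L+1) (GS u) + TL (L+1) (GS v) + TL (L+1) (conv (mid L u) (mid L v)) := by
  have hmidu : ∀ x ∈ mid L u, 1 ≤ x.length := fun x hx => (Multiset.mem_filter.1 hx).2.1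
  have hmidv : ∀ x ∈ mid L v, 1 ≤ x.length := fun x hx => (Multiset.mem_filter.1 hx).2.1
  have hhighu : ∀ x ∈ high L u, ¬ x.length ≤ L := fun x hx => (Multiset.mem_filter.1 hx).2
  have hhighv : ∀ x ∈ high L v, ¬ x.length ≤ L := fun x hx => (Multiset.mem_filter.1 hx).2
  have hhighu1 : ∀ x ∈ high L u, 1 ≤ x.length := fun x hx => by
    have := hhighu x hx; omega
  have hu := GS_split L u
  have hv := GS_split L v
  rw [hu, hv]
  rw [conv_add_left, conv_add_left, conv_nil_left,
    conv_add_right, conv_add_right, conv_nil_right,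
    conv_add_right, conv_add_right, conv_nil_right]
  simp only [TL_add]
  rw [TL_dead_pair L hmidu hhighv, TL_dead_pair' L hhighu hmidv, TL_dead_pair' L hhighu (fun x hx => by have := hhighv x hx; omega)]
  rw [TL_singleton_nil]
  abel

lemma TLcons_of (L : ℕ) (a : Bool) {u v : List Bool}
    (h1 : TL L (GS u) = TL L (GS v)) (h2 : TL L (GS u.tail) = TL L (GS v.tail)) :
    TL L (GS (a :: u)) = TL L (GS (a :: v)) := by
  rw [GS_cons, GS_cons, TL_add, TL_add, TL_map_cons, TL_map_cons, h1,
    filter_of_TL (fun w => w.length + 1 ≤ L) L (fun w hw => by omega) h2]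

lemma TLsnoc_of (L : ℕ) (b : Bool) {u v : List Bool}
    (h1 : TL L (GS u) = TL L (GS v))
    (h2 : TL L (GS u.dropLast) = TL L (GS v.dropLast)) :
    TL L (GS (u ++ [b])) = TL L (GS (v ++ [b])) := by
  rw [GS_snoc, GS_snoc, TL_add, TL_add, TL_map_snoc, TL_map_snoc, h1,
    filter_of_TL (fun w => w.length + 1 ≤ L) L (fun w hw => by omega) h2]

lemma Tcons (L : ℕ) (a : Bool) (u : List Bool) :
    TL (L+1) (GS (a :: u)) = TL (L+1) (GS u) + (TL L (GS u.tail)).map (a :: ·) := by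
  rw [GS_cons, TL_add, TL_map_cons]
  congr 1
  apply congrArg
  exact Multiset.filter_congr (fun x _ => by omega)

lemma Tsnoc (L : ℕ) (b : Bool) (u : List Bool) :
    TL (L+1) (GS (u ++ [b])) = TL (L+1) (GS u) + (TL L (GS u.dropLast)).map (· ++ [b]) := by
  rw [GS_snoc, TL_add, TL_map_snoc]
  congr 1
  apply congrArg
  exact Multiset.filter_congr (fun x _ => by omega)

lemma mid_of {L : ℕ} {u v : List Bool} (h : TL L (GS u) = TL L (GS v)) :
    mid L u = mid L v :=
  filter_of_TL _ L (fun w hw => hw.2) h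

/-- The main swap lemma. -/
theorem SWAPw (L : ℕ) (p q pb qb : List Bool)
    (h1 : TL L (GS p) = TL L (GS q))
    (h2 : TL L (GS p.dropLast) = TL L (GS q.dropLast))
    (h3 : TL L (GS pb) = TL L (GS qb))
    (h4 : TL L (GS pb.tail) = TL L (GS qb.tail))
    (h5 : TL (L+1) (GS p + GS qb) = TL (L+1) (GS q + GS pb)) :
    TL (L+1) (GS (p ++ false :: false :: qb)) = TL (L+1) (GS (q ++ false :: false :: pb)) := by
  have e1 : GS (p ++ false :: false :: qb) + conv (GS p) (GS qb)
      = conv (GS p) (GS (false :: qb)) + conv (GS (p ++ [false])) (GS qb) := by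
    have h := dagger (p ++ [false]) (false :: qb)
    rw [List.dropLast_concat, List.tail_cons,
      show (p ++ [false]) ++ (false :: qb) = p ++ false :: false :: qb by simp] at h
    exact h
  have e2 : GS (q ++ false :: false :: pb) + conv (GS q) (GS pb)
      = conv (GS q) (GS (false :: pb)) + conv (GS (q ++ [false])) (GS pb) := by
    have h := dagger (q ++ [false]) (false :: pb)
    rw [List.dropLast_concat, List.tail_cons,
      show (q ++ [false]) ++ (false :: pb) = q ++ false :: false :: pb by simp] at h
    exact h
  have k1 := KEY L p (false :: qb)
  have k2 := KEY L (p ++ [false]) qb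
  have k3 := KEY L q pb
  have k4 := KEY L q (false :: pb)
  have k5 := KEY L (q ++ [false]) pb
  have k6 := KEY L p qb
  have m1 : mid L p = mid L q := mid_of h1
  have m2 : mid L (false :: qb) = mid L (false :: pb) :=
    mid_of (TLcons_of L false h3.symm h4.symm)
  have m3 : mid L (p ++ [false]) = mid L (q ++ [false]) := mid_of (TLsnoc_of L false h1 h2)
  have m4 : mid L qb = mid L pb := mid_of h3.symm
  have h5' : TL (L+1) (GS p) + TL (L+1) (GS qb) = TL (L+1) (GS q) + TL (L+1) (GS pb) := by
    rw [← TL_add, ← TL_add, h5]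
  have s1 : TL (L+1) (GS (false :: qb)) + TL (L+1) (GS (p ++ [false]))
      = TL (L+1) (GS (false :: pb)) + TL (L+1) (GS (q ++ [false])) := by
    rw [Tcons, Tcons, Tsnoc, Tsnoc, ← h4, h2]
    calc TL (L+1) (GS qb) + (TL L (GS pb.tail)).map (false :: ·)
          + (TL (L+1) (GS p) + (TL L (GS q.dropLast)).map (· ++ [false]))
        = (TL (L+1) (GS p) + TL (L+1) (GS qb))
          + ((TL L (GS pb.tail)).map (false :: ·) + (TL L (GS q.dropLast)).map (· ++ [false])) := by
          abel
      _ = (TL (L+1) (GS q) + TL (L+1) (GS pb))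
          + ((TL L (GS pb.tail)).map (false :: ·) + (TL L (GS q.dropLast)).map (· ++ [false])) := by
          rw [h5']
      _ = TL (L+1) (GS pb) + (TL L (GS pb.tail)).map (false :: ·)
          + (TL (L+1) (GS q) + (TL L (GS q.dropLast)).map (· ++ [false])) := by abel
  -- K-term equalities
  have K13 : TL (L+1) (conv (mid L p) (mid L (false :: qb)))
      = TL (L+1) (conv (mid L q) (mid L (false :: pb))) := by rw [m1, m2]
  have K25 : TL (L+1) (conv (mid L (p ++ [false])) (mid L qb))
      = TL (L+1) (conv (mid L (q ++ [false])) (mid L pb)) := by rw [m3, m4]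
  have K36 : TL (L+1) (conv (mid L q) (mid L pb))
      = TL (L+1) (conv (mid L p) (mid L qb)) := by rw [← m1, ← m4]
  -- the star identity
  have star : TL (L+1) (conv (GS p) (GS (false :: qb)))
        + TL (L+1) (conv (GS (p ++ [false])) (GS qb))
        + TL (L+1) (conv (GS q) (GS pb))
      = TL (L+1) (conv (GS q) (GS (false :: pb)))
        + TL (L+1) (conv (GS (q ++ [false])) (GS pb))
        + TL (L+1) (conv (GS p) (GS qb)) := by
    have big : TL (L+1) (conv (GS p) (GS (false :: qb)))
        + TL (L+1) (conv (GS (p ++ [false])) (GS qb))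
        + TL (L+1) (conv (GS q) (GS pb)) + ({[]} + {[]} + {[]})
        = TL (L+1) (conv (GS q) (GS (false :: pb)))
        + TL (L+1) (conv (GS (q ++ [false])) (GS pb))
        + TL (L+1) (conv (GS p) (GS qb)) + ({[]} + {[]} + {[]}) := by
      calc TL (L+1) (conv (GS p) (GS (false :: qb)))
            + TL (L+1) (conv (GS (p ++ [false])) (GS qb))
            + TL (L+1) (conv (GS q) (GS pb)) + ({[]} + {[]} + {[]})
          = (TL (L+1) (conv (GS p) (GS (false :: qb))) + {[]})
            + (TL (L+1) (conv (GS (p ++ [false])) (GS qb)) + {[]})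
            + (TL (L+1) (conv (GS q) (GS pb)) + {[]}) := by abel
        _ = (TL (L+1) (GS p) + TL (L+1) (GS (false :: qb))
              + TL (L+1) (conv (mid L p) (mid L (false :: qb))))
            + (TL (L+1) (GS (p ++ [false])) + TL (L+1) (GS qb)
              + TL (L+1) (conv (mid L (p ++ [false])) (mid L qb)))
            + (TL (L+1) (GS q) + TL (L+1) (GS pb)
              + TL (L+1) (conv (mid L q) (mid L pb))) := by rw [k1, k2, k3]
        _ = (TL (L+1) (GS p) + TL (L+1) (GS (false :: qb))
              + TL (L+1) (conv (mid L q) (mid L (false :: pb))))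
            + (TL (L+1) (GS (p ++ [false])) + TL (L+1) (GS qb)
              + TL (L+1) (conv (mid L (q ++ [false])) (mid L pb)))
            + (TL (L+1) (GS q) + TL (L+1) (GS pb)
              + TL (L+1) (conv (mid L p) (mid L qb))) := by rw [K13, K25, K36]
        _ = (TL (L+1) (GS (false :: qb)) + TL (L+1) (GS (p ++ [false])))
            + (TL (L+1) (GS p) + TL (L+1) (GS qb) + TL (L+1) (GS q) + TL (L+1) (GS pb)
              + (TL (L+1) (conv (mid L q) (mid L (false :: pb)))
                + TL (L+1) (conv (mid L (q ++ [false])) (mid L pb))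
                + TL (L+1) (conv (mid L p) (mid L qb)))) := by abel
        _ = (TL (L+1) (GS (false :: pb)) + TL (L+1) (GS (q ++ [false])))
            + (TL (L+1) (GS p) + TL (L+1) (GS qb) + TL (L+1) (GS q) + TL (L+1) (GS pb)
              + (TL (L+1) (conv (mid L q) (mid L (false :: pb)))
                + TL (L+1) (conv (mid L (q ++ [false])) (mid L pb))
                + TL (L+1) (conv (mid L p) (mid L qb)))) := by rw [s1]
        _ = (TL (L+1) (GS q) + TL (L+1) (GS (false :: pb))
              + TL (L+1) (conv (mid L q) (mid L (false :: pb))))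
            + (TL (L+1) (GS (q ++ [false])) + TL (L+1) (GS pb)
              + TL (L+1) (conv (mid L (q ++ [false])) (mid L pb)))
            + (TL (L+1) (GS p) + TL (L+1) (GS qb)
              + TL (L+1) (conv (mid L p) (mid L qb))) := by abel
        _ = (TL (L+1) (conv (GS q) (GS (false :: pb))) + {[]})
            + (TL (L+1) (conv (GS (q ++ [false])) (GS pb)) + {[]})
            + (TL (L+1) (conv (GS p) (GS qb)) + {[]}) := by rw [k4, k5, k6]
        _ = TL (L+1) (conv (GS q) (GS (false :: pb)))
            + TL (L+1) (conv (GS (q ++ [false])) (GS pb))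
            + TL (L+1) (conv (GS p) (GS qb)) + ({[]} + {[]} + {[]}) := by abel
    exact add_right_cancel big
  -- assemble
  have E1 : TL (L+1) (GS (p ++ false :: false :: qb)) + TL (L+1) (conv (GS p) (GS qb))
      = TL (L+1) (conv (GS p) (GS (false :: qb)))
        + TL (L+1) (conv (GS (p ++ [false])) (GS qb)) := by
    rw [← TL_add, ← TL_add, e1]
  have E2 : TL (L+1) (GS (q ++ false :: false :: pb)) + TL (L+1) (conv (GS q) (GS pb))
      = TL (L+1) (conv (GS q) (GS (false :: pb)))
        + TL (L+1) (conv (GS (q ++ [false])) (GS pb)) := by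
    rw [← TL_add, ← TL_add, e2]
  have final : TL (L+1) (GS (p ++ false :: false :: qb))
        + (TL (L+1) (conv (GS p) (GS qb)) + TL (L+1) (conv (GS q) (GS pb)))
      = TL (L+1) (GS (q ++ false :: false :: pb))
        + (TL (L+1) (conv (GS p) (GS qb)) + TL (L+1) (conv (GS q) (GS pb))) := by
    calc TL (L+1) (GS (p ++ false :: false :: qb))
          + (TL (L+1) (conv (GS p) (GS qb)) + TL (L+1) (conv (GS q) (GS pb)))
        = (TL (L+1) (GS (p ++ false :: false :: qb)) + TL (L+1) (conv (GS p) (GS qb)))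
          + TL (L+1) (conv (GS q) (GS pb)) := by abel
      _ = TL (L+1) (conv (GS p) (GS (false :: qb)))
          + TL (L+1) (conv (GS (p ++ [false])) (GS qb))
          + TL (L+1) (conv (GS q) (GS pb)) := by rw [E1]
      _ = TL (L+1) (conv (GS q) (GS (false :: pb)))
          + TL (L+1) (conv (GS (q ++ [false])) (GS pb))
          + TL (L+1) (conv (GS p) (GS qb)) := star
      _ = (TL (L+1) (GS (q ++ false :: false :: pb)) + TL (L+1) (conv (GS q) (GS pb)))
          + TL (L+1) (conv (GS p) (GS qb)) := by rw [E2]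
      _ = TL (L+1) (GS (q ++ false :: false :: pb))
          + (TL (L+1) (conv (GS p) (GS qb)) + TL (L+1) (conv (GS q) (GS pb))) := by abel
  exact add_right_cancel final

lemma T0 (u : List Bool) : TL 0 (GS u) = {[]} := by
  rw [TL, show (GS u).filter (fun w => w.length ≤ 0) = (GS u).filter (fun w => w.length = 0) from
    Multiset.filter_congr (fun x _ => by omega), filter_len_zero]

theorem SWAPany (L : ℕ) (p q pb qb : List Bool)
    (h1 : TL L (GS p) = TL L (GS q))
    (h2 : TL L (GS p.dropLast) = TL L (GS q.dropLast))
    (h3 : TL L (GS pb) = TL L (GS qb))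
    (h4 : TL L (GS pb.tail) = TL L (GS qb.tail))
    (h5 : TL L (GS p + GS qb) = TL L (GS q + GS pb)) :
    TL L (GS (p ++ false :: false :: qb)) = TL L (GS (q ++ false :: false :: pb)) := by
  cases L with
  | zero => rw [T0, T0]
  | succ L' =>
    exact SWAPw L' p q pb qb (TL_mono (Nat.le_succ _) h1) (TL_mono (Nat.le_succ _) h2)
      (TL_mono (Nat.le_succ _) h3) (TL_mono (Nat.le_succ _) h4) h5

lemma TLcons_of' (L : ℕ) (a : Bool) {u v : List Bool}
    (h1 : TL (L+1) (GS u) = TL (L+1) (GS v))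
    (h2 : TL L (GS u.tail) = TL L (GS v.tail)) :
    TL (L+1) (GS (a :: u)) = TL (L+1) (GS (a :: v)) := by
  rw [Tcons, Tcons, h1, h2]

lemma TLsnoc_of' (L : ℕ) (b : Bool) {u v : List Bool}
    (h1 : TL (L+1) (GS u) = TL (L+1) (GS v))
    (h2 : TL L (GS u.dropLast) = TL L (GS v.dropLast)) :
    TL (L+1) (GS (u ++ [b])) = TL (L+1) (GS (v ++ [b])) := by
  rw [Tsnoc, Tsnoc, h1, h2]

lemma TL_add_of (L : ℕ) {u v u' v' : List Bool}
    (h : TL L (GS u) = TL L (GS u')) (h' : TL L (GS v) = TL L (GS v')) :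
    TL L (GS u + GS v) = TL L (GS u' + GS v') := by
  rw [TL_add, TL_add, h, h']

/-- The two core (punctured) padded Morse–Thue strings. -/
def cp : ℕ → List Bool × List Bool
  | 0 => ([false, true], [true, false])
  | j+1 =>
    ((false :: ((cp j).1 ++ [false])) ++ false :: false :: (false :: ((cp j).2 ++ [false])),
     (false :: ((cp j).2 ++ [false])) ++ false :: false :: (false :: ((cp j).1 ++ [false])))

lemma T1 (u : List Bool) :
    TL 1 (GS u) = {[]} + ((u.map (fun c => [c]) : List (List Bool)) : Multiset (List Bool)) := by
  induction u using GS_ind with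
  | h0 => rw [GS_nil, TL_singleton_nil]; simp
  | h a l ih iht =>
    rw [show (1 : ℕ) = 0 + 1 from rfl, Tcons, T0]
    rw [show (0 : ℕ) + 1 = 1 from rfl] at *
    rw [ih]
    simp only [List.map_cons, Multiset.map_singleton]
    rw [show ((([a] :: l.map (fun c => [c]) : List (List Bool))) : Multiset (List Bool))
      = [a] ::ₘ ((l.map (fun c => [c]) : List (List Bool)) : Multiset (List Bool)) from rfl]
    rw [← Multiset.singleton_add]
    abel

/-- The inductive invariant. -/
def InvP (j : ℕ) : Prop :=
  TL (j+1) (GS (false :: ((cp j).1 ++ [false]))) = TL (j+1) (GS (false :: ((cp j).2 ++ [false]))) ∧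
  TL (j+1) (GS ((cp j).1 ++ [false])) = TL (j+1) (GS ((cp j).2 ++ [false])) ∧
  TL (j+1) (GS (false :: (cp j).1)) = TL (j+1) (GS (false :: (cp j).2)) ∧
  TL (j+1) (GS (cp j).1) = TL (j+1) (GS (cp j).2)

lemma inv_zero : InvP 0 := by
  refine ⟨?_, ?_, ?_, ?_⟩ <;> (rw [T1, T1]; simp [cp]; decide)

lemma inv_step (j : ℕ) (H : InvP j) : InvP (j+1) := by
  obtain ⟨H1, H2, H3, H4⟩ := H
  have hcp1 : (cp (j+1)).1
      = (false :: ((cp j).1 ++ [false])) ++ false :: false :: (false :: ((cp j).2 ++ [false])) :=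
    rfl
  have hcp2 : (cp (j+1)).2
      = (false :: ((cp j).2 ++ [false])) ++ false :: false :: (false :: ((cp j).1 ++ [false])) :=
    rfl
  generalize ha : (cp j).1 = a at *
  generalize hb : (cp j).2 = b at *
  have hXd : (false :: (a ++ [false])).dropLast = false :: a := by
    rw [show false :: (a ++ [false]) = (false :: a) ++ [false] from rfl, List.dropLast_concat]
  have hYd : (false :: (b ++ [false])).dropLast = false :: b := by
    rw [show false :: (b ++ [false]) = (false :: b) ++ [false] from rfl, List.dropLast_concat]
  have I4' : TL (j+2) (GS ((false :: (a ++ [false])) ++ false :: false :: (false :: (b ++ [false]))))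
      = TL (j+2) (GS ((false :: (b ++ [false])) ++ false :: false :: (false :: (a ++ [false])))) := by
    refine SWAPw (j+1) _ _ _ _ H1 ?_ H1 ?_ ?_
    · rw [hXd, hYd]; exact H3
    · exact H2
    · rw [add_comm (GS (false :: (a ++ [false]))) (GS (false :: (b ++ [false])))]
  have hsplit1 : (false :: (a ++ [false])) ++ false :: false :: (false :: (b ++ [false]))
      = ((false :: (a ++ [false])) ++ false :: false :: (false :: b)) ++ [false] := by
    simp
  have hsplit2 : (false :: (b ++ [false])) ++ false :: false :: (false :: (a ++ [false]))
      = ((false :: (b ++ [false])) ++ false :: false :: (false :: a)) ++ [false] := by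
    simp
  have Hdrop : TL (j+1)
        (GS (((false :: (a ++ [false])) ++ false :: false :: (false :: (b ++ [false]))).dropLast))
      = TL (j+1)
        (GS (((false :: (b ++ [false])) ++ false :: false :: (false :: (a ++ [false]))).dropLast)) := by
    rw [hsplit1, hsplit2, List.dropLast_concat, List.dropLast_concat]
    refine SWAPany (j+1) _ _ (false :: a) (false :: b) H1 ?_ H3 H4 (TL_add_of _ H1 H3.symm)
    rw [hXd, hYd]; exact H3
  have I2' : TL (j+2) (GS (((false :: (a ++ [false])) ++ false :: false :: (false :: (b ++ [false]))) ++ [false]))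
      = TL (j+2) (GS (((false :: (b ++ [false])) ++ false :: false :: (false :: (a ++ [false]))) ++ [false])) :=
    TLsnoc_of' (j+1) false I4' Hdrop
  have Htail : TL (j+1) (GS ((a ++ [false]) ++ false :: false :: (false :: (b ++ [false]))))
      = TL (j+1) (GS ((b ++ [false]) ++ false :: false :: (false :: (a ++ [false])))) := by
    refine SWAPany (j+1) _ _ (false :: (a ++ [false])) (false :: (b ++ [false])) H2 ?_ H1 H2
      (TL_add_of _ H2 H1.symm)
    rw [List.dropLast_concat, List.dropLast_concat]; exact H4
  have I3' : TL (j+2) (GS (false :: ((false :: (a ++ [false])) ++ false :: false :: (false :: (b ++ [false])))))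
      = TL (j+2) (GS (false :: ((false :: (b ++ [false])) ++ false :: false :: (false :: (a ++ [false]))))) :=
    TLcons_of' (j+1) false I4' Htail
  have hsplit3 : (a ++ [false]) ++ false :: false :: (false :: (b ++ [false]))
      = ((a ++ [false]) ++ false :: false :: (false :: b)) ++ [false] := by simp
  have hsplit4 : (b ++ [false]) ++ false :: false :: (false :: (a ++ [false]))
      = ((b ++ [false]) ++ false :: false :: (false :: a)) ++ [false] := by simp
  have Hdeep : TL j (GS (((a ++ [false]) ++ false :: false :: (false :: (b ++ [false]))).dropLast))
      = TL j (GS (((b ++ [false]) ++ false :: false :: (false :: (a ++ [false]))).dropLast)) := by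
    rw [hsplit3, hsplit4, List.dropLast_concat, List.dropLast_concat]
    refine SWAPany j _ _ (false :: a) (false :: b) (TL_mono (Nat.le_succ _) H2) ?_
      (TL_mono (Nat.le_succ _) H3) (TL_mono (Nat.le_succ _) H4)
      (TL_mono (Nat.le_succ _) (TL_add_of _ H2 H3.symm))
    rw [List.dropLast_concat, List.dropLast_concat]; exact TL_mono (Nat.le_succ _) H4
  have I1' : TL (j+2) (GS (false :: ((((false :: (a ++ [false])) ++ false :: false :: (false :: (b ++ [false]))) ++ [false]))))
      = TL (j+2) (GS (false :: ((((false :: (b ++ [false])) ++ false :: false :: (false :: (a ++ [false]))) ++ [false])))) := by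
    refine TLcons_of' (j+1) false I2' ?_
    show TL (j+1) (GS (((a ++ [false]) ++ false :: false :: (false :: (b ++ [false]))) ++ [false])) = _
    exact TLsnoc_of' j false Htail Hdeep
  exact ⟨by rw [hcp1, hcp2]; exact I1', by rw [hcp1, hcp2]; exact I2',
    by rw [hcp1, hcp2]; exact I3', by rw [hcp1, hcp2]; exact I4'⟩

lemma inv_all (j : ℕ) : InvP j := by
  induction j with
  | zero => exact inv_zero
  | succ j ih => exact inv_step j ih

lemma cp_len (j : ℕ) : (cp j).1.length + 6 = 4 * 2^(j+1) ∧ (cp j).2.length + 6 = 4 * 2^(j+1) := by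
  induction j with
  | zero => simp [cp]
  | succ j ih =>
    obtain ⟨h1, h2⟩ := ih
    constructor <;>
    · show (_ : List Bool).length + 6 = _
      simp only [cp, List.length_append, List.length_cons, List.length_nil]
      rw [pow_succ]
      omega

lemma cp_ne (j : ℕ) : (cp j).1 ≠ (cp j).2 := by
  induction j with
  | zero => decide
  | succ j ih =>
    intro h
    have hlen : (false :: ((cp j).1 ++ [false])).length
        = (false :: ((cp j).2 ++ [false])).length := by
      have := cp_len j
      simp only [List.length_cons, List.length_append, List.length_nil]
      omega
    have h' : (false :: ((cp j).1 ++ [false])) ++ false :: false :: (false :: ((cp j).2 ++ [false]))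
        = (false :: ((cp j).2 ++ [false])) ++ false :: false :: (false :: ((cp j).1 ++ [false])) := h
    obtain ⟨hXY, -⟩ := List.append_inj h' (by simpa using hlen)
    have : (cp j).1 ++ [false] = (cp j).2 ++ [false] := by
      injection hXY
    exact ih (List.append_cancel_right this)
end GD

/-- For every `k ≥ 1` there are two distinct binary strings of
length `4(2^k - 1) - 2` with the same gapped `k`-deck; i.e.
`G(k) ≤ 4(2^k - 1) - 2`. -/
theorem stmt5 (k : ℕ) (hk : 1 ≤ k) :
    (∃ x y : List Bool, x.length = 4 * (2 ^ k - 1) - 2 ∧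
      y.length = 4 * (2 ^ k - 1) - 2 ∧ x ≠ y ∧ Bdeck k x = Bdeck k y) ∧
    Gval k ≤ 4 * (2 ^ k - 1) - 2 := by
  cases k with
  | zero => exact absurd hk (by omega)
  | succ m =>
    have hlen := GD.cp_len m
    have h2p : 2 ≤ 2 ^ (m + 1) := by
      have : (1:ℕ) ≤ 2 ^ m := Nat.one_le_two_pow
      rw [pow_succ]; omega
    have hx : (GD.cp m).1.length = 4 * (2 ^ (m + 1) - 1) - 2 := by omega
    have hy : (GD.cp m).2.length = 4 * (2 ^ (m + 1) - 1) - 2 := by omega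
    have hne := GD.cp_ne m
    have hdeck : Bdeck (m + 1) (GD.cp m).1 = Bdeck (m + 1) (GD.cp m).2 := by
      have h4 := (GD.inv_all m).2.2.2
      show gDeck 2 (m + 1) (GD.cp m).1 = gDeck 2 (m + 1) (GD.cp m).2
      unfold gDeck
      exact GD.filter_of_TL _ (m + 1) (fun w hw => hw.2) h4
    refine ⟨⟨(GD.cp m).1, (GD.cp m).2, hx, hy, hne, hdeck⟩, ?_⟩
    apply Nat.sInf_le
    exact ⟨by omega, (GD.cp m).1, (GD.cp m).2, hx, hy, hne, hdeck⟩
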